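/- Let h > 0 and let c : ℝ → ℝ be a C² function with compact support contained in an interval of length h. Then ‖c‖_{L²(ℝ)} ≤ (h²/π²) ‖c''‖_{L²(ℝ)}. -/

import Mathlib

/-!
Reflect `c` oddly about `a`: `g x = c x - c (2a - x)` lives on an interval of length `2h`, takes
equal values at its ends and has mean zero. Integration by parts gives
`|ĝ n| ≤ (2h / 2π|n|) |ĝ' n|` for `n ≠ 0`, so Parseval yields `‖g‖ ≤ (h/π) ‖g'‖`, that is
`‖c‖ ≤ (h/π) ‖c'‖` (Wirtinger). Since `c'` is again supported in `[a, a + h]`, apply this twice.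
-/

open MeasureTheory Set Real Function

lemma ContinuousOn.memLp_restrict_Ioc {E : Type*} [NormedAddCommGroup E] {f : ℝ → E} {a b : ℝ}
    (hf : ContinuousOn f (Icc a b)) (p : ENNReal) : MemLp f p (volume.restrict (Ioc a b)) := by
  obtain ⟨C, hC⟩ := isCompact_Icc.exists_bound_of_continuousOn hf
  exact (MemLp.of_bound (hf.aestronglyMeasurable measurableSet_Icc) C
    (ae_restrict_of_forall_mem measurableSet_Icc hC)).mono_measure
    (Measure.restrict_mono Ioc_subset_Icc_self le_rfl)

lemma norm_fourierCoeffOn_le_of_hasDerivAt {a b : ℝ} (hab : a < b) {f f' : ℝ → ℂ}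
    (hf : ∀ x ∈ uIcc a b, HasDerivAt f (f' x) x) (hf' : IntervalIntegrable f' volume a b)
    (hper : f a = f b) {n : ℤ} (hn : n ≠ 0) :
    ‖fourierCoeffOn hab f n‖ ≤ (b - a) / (2 * π) * ‖fourierCoeffOn hab f' n‖ := by
  have hn1 : (1 : ℝ) ≤ |(n : ℝ)| := by
    rw [← Int.cast_abs]
    exact_mod_cast Int.one_le_abs hn
  rw [fourierCoeffOn_of_hasDerivAt hab hn hf hf', hper, sub_self, mul_zero, zero_sub, norm_mul,
    norm_neg, norm_mul, ← Complex.ofReal_sub]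
  simp only [one_div, norm_inv, norm_mul, norm_neg, Complex.norm_real, Complex.norm_I,
    Complex.norm_intCast, Complex.norm_ofNat, Real.norm_eq_abs, abs_of_pos pi_pos,
    abs_of_pos (sub_pos.2 hab), mul_one]
  rw [← mul_assoc, ← div_eq_inv_mul]
  refine mul_le_mul_of_nonneg_right ?_ (norm_nonneg _)
  exact div_le_div_of_nonneg_left (sub_pos.2 hab).le (by positivity)
    (le_mul_of_one_le_right (by positivity) hn1)

/-- Wirtinger's inequality. -/
theorem intervalIntegral_norm_sq_le_of_fourierCoeffOn_zero {a b : ℝ} (hab : a < b)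
    {f f' : ℝ → ℂ} (hf : ∀ x ∈ uIcc a b, HasDerivAt f (f' x) x)
    (hf' : MemLp f' 2 (volume.restrict (Ioc a b))) (hper : f a = f b)
    (hmean : fourierCoeffOn hab f 0 = 0) :
    ∫ x in a..b, ‖f x‖ ^ 2 ≤ ((b - a) / (2 * π)) ^ 2 * ∫ x in a..b, ‖f' x‖ ^ 2 := by
  have hf'_int : IntervalIntegrable f' volume a b :=
    (intervalIntegrable_iff_integrableOn_Ioc_of_le hab.le).2 (hf'.integrable one_le_two)
  have hcoeff (n : ℤ) :
      ‖fourierCoeffOn hab f n‖ ^ 2 ≤ ((b - a) / (2 * π)) ^ 2 * ‖fourierCoeffOn hab f' n‖ ^ 2 := by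
    rcases eq_or_ne n 0 with rfl | hn
    · rw [hmean, norm_zero, zero_pow two_ne_zero]
      positivity
    · rw [← mul_pow]
      gcongr
      exact norm_fourierCoeffOn_le_of_hasDerivAt hab hf hf'_int hper hn
  have hf_L2 : MemLp f 2 (volume.restrict (Ioc a b)) :=
    ContinuousOn.memLp_restrict_Ioc
      (fun x hx => (hf x (Icc_subset_uIcc hx)).continuousAt.continuousWithinAt) 2
  have parseval := hasSum_le hcoeff (hasSum_sq_fourierCoeffOn hab hf_L2)
    ((hasSum_sq_fourierCoeffOn hab hf').mul_left _)
  rw [smul_eq_mul, smul_eq_mul, mul_left_comm] at parseval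
  exact le_of_mul_le_mul_left parseval (inv_pos.2 (sub_pos.2 hab))

section Reflection

variable {u : ℝ → ℝ} {a b : ℝ}

lemma support_subset_Ioo_of_continuous (hu : Continuous u) (hs : support u ⊆ Icc a b) :
    support u ⊆ Ioo a b := by
  simpa using interior_maximal hs hu.isOpen_support

lemma eq_zero_of_notMem_Ioo (hu : Continuous u) (hs : support u ⊆ Icc a b) {x : ℝ}
    (hx : x ∉ Ioo a b) : u x = 0 :=
  notMem_support.mp fun hux => hx (support_subset_Ioo_of_continuous hu hs hux)

lemma mul_apply_reflect_eq_zero (hu : Continuous u) (hs : support u ⊆ Icc a b) (x : ℝ) :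
    u x * u (2 * a - x) = 0 := by
  by_contra hne
  obtain ⟨hx, hx'⟩ := mul_ne_zero_iff.mp hne
  have := (support_subset_Ioo_of_continuous hu hs hx).1
  have := (support_subset_Ioo_of_continuous hu hs hx').1
  linarith

lemma intervalIntegral_add_mul_reflect_sq (hu : Continuous u) (hs : support u ⊆ Icc a b)
    (hab : a < b) {s : ℝ} (hs1 : s ^ 2 = 1) :
    ∫ x in (2 * a - b)..b, (u x + s * u (2 * a - x)) ^ 2 = 2 * ∫ x, u x ^ 2 := by
  have hsq (x : ℝ) : (u x + s * u (2 * a - x)) ^ 2 = u x ^ 2 + u (2 * a - x) ^ 2 := by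
    linear_combination 2 * s * mul_apply_reflect_eq_zero hu hs x + u (2 * a - x) ^ 2 * hs1
  have hsupp : support (fun x => u x ^ 2) ⊆ Ioc (2 * a - b) b := fun x hx => by
    have hx' := hs (by simpa using hx)
    exact ⟨by linarith [hx'.1], hx'.2⟩
  simp_rw [hsq]
  rw [intervalIntegral.integral_add
      ((by fun_prop : Continuous fun x => u x ^ 2).intervalIntegrable _ _)
      ((by fun_prop : Continuous fun x => u (2 * a - x) ^ 2).intervalIntegrable _ _),
    intervalIntegral.integral_comp_sub_left (fun x => u x ^ 2), sub_sub_cancel,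
    intervalIntegral.integral_eq_integral_of_support_subset hsupp]
  ring

lemma intervalIntegral_sub_reflect (hu : Continuous u) :
    ∫ x in (2 * a - b)..b, (u x - u (2 * a - x)) = 0 := by
  rw [intervalIntegral.integral_sub (hu.intervalIntegrable _ _)
      ((by fun_prop : Continuous fun x => u (2 * a - x)).intervalIntegrable _ _),
    intervalIntegral.integral_comp_sub_left u, sub_sub_cancel, sub_self]

lemma hasDerivAt_sub_reflect (hu : Differentiable ℝ u) (x : ℝ) :
    HasDerivAt (fun y => u y - u (2 * a - y)) (deriv u x + deriv u (2 * a - x)) x := by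
  have hrefl : HasDerivAt (fun y => u (2 * a - y)) (deriv u (2 * a - x) * -1) x :=
    (hu _).hasDerivAt.comp x ((hasDerivAt_id x).const_sub (2 * a))
  exact ((hu x).hasDerivAt.sub hrefl).congr_deriv (by ring)

end Reflection

theorem integral_sq_le_of_support_subset_Icc {u : ℝ → ℝ} {a b : ℝ} (hu : ContDiff ℝ 1 u)
    (hs : support u ⊆ Icc a b) (hab : a < b) :
    ∫ x, u x ^ 2 ≤ ((b - a) / π) ^ 2 * ∫ x, deriv u x ^ 2 := by
  have hab' : 2 * a - b < b := by linarith
  have hdu : Differentiable ℝ u := hu.differentiable one_ne_zero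
  have hu' : Continuous (deriv u) := hu.continuous_deriv le_rfl
  have hs' : support (deriv u) ⊆ Icc a b :=
    support_deriv_subset.trans (closure_minimal hs isClosed_Icc)
  set g : ℝ → ℂ := fun x => ((u x - u (2 * a - x) : ℝ) : ℂ)
  set g' : ℝ → ℂ := fun x => ((deriv u x + deriv u (2 * a - x) : ℝ) : ℂ)
  have hg (x : ℝ) : HasDerivAt g (g' x) x := (hasDerivAt_sub_reflect hdu x).ofReal_comp
  have hg'_L2 : MemLp g' 2 (volume.restrict (Ioc (2 * a - b) b)) :=
    ContinuousOn.memLp_restrict_Ioc (by fun_prop) 2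
  have hg_ends : g (2 * a - b) = g b := by
    have hb : u b = 0 := eq_zero_of_notMem_Ioo hu.continuous hs fun h => h.2.ne rfl
    have hb' : u (2 * a - b) = 0 :=
      eq_zero_of_notMem_Ioo hu.continuous hs fun h => by linarith [h.1]
    simp [g, hb, hb']
  have hg_mean : fourierCoeffOn hab' g 0 = 0 := by
    rw [fourierCoeffOn_eq_integral]
    simp only [neg_zero, fourier_zero, one_smul, g]
    rw [intervalIntegral.integral_ofReal, intervalIntegral_sub_reflect hu.continuous,
      Complex.ofReal_zero, smul_zero]
  have key := intervalIntegral_norm_sq_le_of_fourierCoeffOn_zero hab' (fun x _ => hg x) hg'_L2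
    hg_ends hg_mean
  have hsub := intervalIntegral_add_mul_reflect_sq hu.continuous hs hab (s := -1) (by norm_num)
  have hadd := intervalIntegral_add_mul_reflect_sq hu' hs' hab (s := 1) (by norm_num)
  simp only [neg_one_mul, ← sub_eq_add_neg, one_mul] at hsub hadd
  simp only [g, g', Complex.norm_real, Real.norm_eq_abs, sq_abs] at key
  rw [hsub, hadd, show (b - (2 * a - b)) / (2 * π) = (b - a) / π by field_simp; ring] at key
  linarith

theorem stmt_7_general (h : ℝ) (hh : 0 < h) (c : ℝ → ℝ) (hc : ContDiff ℝ 2 c)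
    (a : ℝ) (hsupp : Function.support c ⊆ Set.Icc a (a + h)) :
    Real.sqrt (∫ t, (c t) ^ 2) ≤
      (h ^ 2 / Real.pi ^ 2) * Real.sqrt (∫ t, (deriv (deriv c) t) ^ 2) := by
  have hc' : ContDiff ℝ 1 (deriv c) := hc.iterate_deriv' 1 1
  have hsupp' : support (deriv c) ⊆ Icc a (a + h) :=
    support_deriv_subset.trans (closure_minimal hsupp isClosed_Icc)
  have hc_le := integral_sq_le_of_support_subset_Icc (hc.of_le one_le_two) hsupp (by linarith)
  have hc'_le := integral_sq_le_of_support_subset_Icc hc' hsupp' (by linarith)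
  rw [add_sub_cancel_left] at hc_le hc'_le
  have hsq : ∫ t, c t ^ 2 ≤ (h ^ 2 / π ^ 2) ^ 2 * ∫ t, deriv (deriv c) t ^ 2 :=
    calc ∫ t, c t ^ 2
        ≤ (h / π) ^ 2 * ∫ t, deriv c t ^ 2 := hc_le
      _ ≤ (h / π) ^ 2 * ((h / π) ^ 2 * ∫ t, deriv (deriv c) t ^ 2) := by gcongr
      _ = (h ^ 2 / π ^ 2) ^ 2 * ∫ t, deriv (deriv c) t ^ 2 := by ring
  calc √(∫ t, c t ^ 2)
      ≤ √((h ^ 2 / π ^ 2) ^ 2 * ∫ t, deriv (deriv c) t ^ 2) := Real.sqrt_le_sqrt hsq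
    _ = h ^ 2 / π ^ 2 * √(∫ t, deriv (deriv c) t ^ 2) := by
        rw [Real.sqrt_mul (by positivity), Real.sqrt_sq (by positivity)]

theorem stmt_7 (h : ℝ) (hh : 0 < h) (c : ℝ → ℝ) (hc : ContDiff ℝ 2 c)
    (hcpt : HasCompactSupport c)
    (a : ℝ) (hsupp : Function.support c ⊆ Set.Icc a (a + h)) :
    Real.sqrt (∫ t, (c t) ^ 2) ≤
      (h ^ 2 / Real.pi ^ 2) * Real.sqrt (∫ t, (deriv (deriv c) t) ^ 2) :=
  stmt_7_general h hh c hc a hsupp
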